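/- For any real numbers a and γ > 0, the integral from 0 to ∞ of e^{t}·Φ(a - t/γ) dt equals -Φ(a) + e^{γ²/2 + aγ}·Φ(a + γ), where Φ is the standard Gaussian CDF. -/

import Mathlib

open MeasureTheory

/-- The standard Gaussian cumulative distribution function. -/
noncomputable def Phi (x : ℝ) : ℝ :=
  ∫ u in Set.Iic x, Real.exp (-u ^ 2 / 2) / Real.sqrt (2 * Real.pi)

noncomputable def phi (u : ℝ) : ℝ := Real.exp (-u ^ 2 / 2) / Real.sqrt (2 * Real.pi)

lemma phi_nonneg (u : ℝ) : 0 ≤ phi u :=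
  div_nonneg (Real.exp_pos _).le (Real.sqrt_nonneg _)

lemma integrable_phi : Integrable phi := by
  have h : Integrable (fun u : ℝ => Real.exp (-(1/2) * u ^ 2)) := integrable_exp_neg_mul_sq (by norm_num)
  have := h.div_const (Real.sqrt (2 * Real.pi))
  refine this.congr (Filter.Eventually.of_forall fun u => ?_)
  simp only [phi]
  ring_nf

lemma continuous_phi : Continuous phi := by
  unfold phi
  continuity

lemma hasDerivAt_Phi (x : ℝ) : HasDerivAt Phi (phi x) x := by
  have key : ∀ y : ℝ, Phi y = (∫ u in (0:ℝ)..y, phi u) + Phi 0 := by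
    intro y
    have := intervalIntegral.integral_Iic_sub_Iic (integrable_phi.integrableOn (s := Set.Iic 0))
      (integrable_phi.integrableOn (s := Set.Iic y))
    simp only [Phi, phi] at this ⊢
    linarith
  have hD : HasDerivAt (fun y => (∫ u in (0:ℝ)..y, phi u) + Phi 0) (phi x) x := by
    have := intervalIntegral.integral_hasDerivAt_right
      (integrable_phi.intervalIntegrable (a := 0) (b := x))
      (continuous_phi.stronglyMeasurable.stronglyMeasurableAtFilter)
      continuous_phi.continuousAt
    exact this.add_const _
  exact hD.congr_of_eventuallyEq (Filter.Eventually.of_forall key)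

lemma Phi_nonneg (x : ℝ) : 0 ≤ Phi x :=
  setIntegral_nonneg measurableSet_Iic fun u _ => phi_nonneg u

lemma hasDerivAt_phi (u : ℝ) : HasDerivAt phi (-u * phi u) u := by
  have h1 : HasDerivAt (fun u : ℝ => -u ^ 2 / 2) (-u) u := by
    have := ((hasDerivAt_pow 2 u).neg).div_const 2
    simpa using this.congr_deriv (by ring)
  have h2 := (h1.exp).div_const (Real.sqrt (2 * Real.pi))
  refine h2.congr_deriv ?_
  simp [phi]
  ring

lemma tendsto_phi_atBot : Filter.Tendsto phi Filter.atBot (nhds 0) := by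
  have hs : (0:ℝ) < Real.sqrt (2 * Real.pi) := Real.sqrt_pos.2 (by positivity)
  have hg : Filter.Tendsto (fun u : ℝ => Real.exp u / Real.sqrt (2 * Real.pi))
      Filter.atBot (nhds 0) := by
    have := Real.tendsto_exp_atBot.div_const (Real.sqrt (2 * Real.pi))
    simpa using this
  refine squeeze_zero' (Filter.Eventually.of_forall fun u => phi_nonneg u) ?_ hg
  filter_upwards [Filter.eventually_le_atBot (-2 : ℝ)] with u hu
  have : Real.exp (-u ^ 2 / 2) ≤ Real.exp u := Real.exp_le_exp.2 (by nlinarith)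
  exact div_le_div_of_nonneg_right this hs.le

lemma integrable_mul_phi : Integrable (fun u => -u * phi u) := by
  have h : Integrable (fun u : ℝ => u * Real.exp (-(1/2) * u ^ 2)) :=
    integrable_mul_exp_neg_mul_sq (by norm_num)
  have := (h.div_const (Real.sqrt (2 * Real.pi))).neg
  refine this.congr (Filter.Eventually.of_forall fun u => ?_)
  simp only [Pi.neg_apply, phi]
  ring_nf

/-- The Mills-type bound: `Phi x ≤ phi x` for `x ≤ -1`. -/
lemma Phi_le_phi {x : ℝ} (hx : x ≤ -1) : Phi x ≤ phi x := by
  have key : ∫ u in Set.Iic x, -u * phi u = phi x := by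
    have := integral_Iic_of_hasDerivAt_of_tendsto' (f := phi) (f' := fun u => -u * phi u)
      (a := x) (m := 0) (fun u _ => hasDerivAt_phi u)
      (integrable_mul_phi.integrableOn) tendsto_phi_atBot
    simpa using this
  rw [← key]
  have hle : ∀ u ∈ Set.Iic x, phi u ≤ -u * phi u := by
    intro u hu
    have hu1 : 1 ≤ -u := by simp only [Set.mem_Iic] at hu; linarith
    nlinarith [phi_nonneg u]
  have hPhi : Phi x = ∫ u in Set.Iic x, phi u := rfl
  rw [hPhi]
  exact setIntegral_mono_on integrable_phi.integrableOn
    integrable_mul_phi.integrableOn measurableSet_Iic hle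

lemma tendsto_Phi_atBot : Filter.Tendsto Phi Filter.atBot (nhds 0) := by
  refine squeeze_zero' ?_ ?_ tendsto_phi_atBot
  · exact Filter.eventually_atBot.2 ⟨-1, fun x _ => Phi_nonneg x⟩
  · exact Filter.eventually_atBot.2 ⟨-1, fun x hx => Phi_le_phi hx⟩

theorem gaussian_integral_exp_pos (a γ : ℝ) (hγ : 0 < γ) :
    ∫ t in Set.Ioi (0 : ℝ), Real.exp t * Phi (a - t / γ) =
      -Phi a + Real.exp (γ ^ 2 / 2 + a * γ) * Phi (a + γ) := by
  set K : ℝ := Real.exp (γ ^ 2 / 2 + a * γ) with hK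
  set F : ℝ → ℝ := fun t => Real.exp t * Phi (a - t / γ) - K * Phi (a + γ - t / γ) with hF
  have hγ' : γ ≠ 0 := hγ.ne'
  -- key exponential identity
  have hid : ∀ t : ℝ, K * phi (a + γ - t / γ) = Real.exp t * phi (a - t / γ) := by
    intro t
    simp only [phi, hK]
    rw [mul_div_assoc' _ _ (Real.sqrt (2 * Real.pi)), mul_div_assoc' _ _ (Real.sqrt (2 * Real.pi)),
      ← Real.exp_add, ← Real.exp_add]
    congr 2
    field_simp
    ring
  -- derivative of inner map
  have hinner : ∀ (c t : ℝ), HasDerivAt (fun t => c - t / γ) (-(1/γ)) t := by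
    intro c t
    simpa using ((hasDerivAt_id t).div_const γ).const_sub c
  have hderiv : ∀ t : ℝ, HasDerivAt F (Real.exp t * Phi (a - t / γ)) t := by
    intro t
    have h1 : HasDerivAt (fun t => Phi (a - t / γ)) (phi (a - t / γ) * (-(1/γ))) t :=
      by have := (hasDerivAt_Phi (a - t / γ)).comp t (hinner a t); exact this
    have h2 : HasDerivAt (fun t => Phi (a + γ - t / γ)) (phi (a + γ - t / γ) * (-(1/γ))) t :=
      by have := (hasDerivAt_Phi (a + γ - t / γ)).comp t (hinner (a + γ) t); exact this
    have h3 := ((Real.hasDerivAt_exp t).mul h1).sub (h2.const_mul K)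
    refine h3.congr_deriv ?_
    rw [show K * (phi (a + γ - t / γ) * -(1 / γ)) = K * phi (a + γ - t / γ) * -(1 / γ) by ring,
      hid t]
    ring
  -- limit of F at infinity
  have hdiv : Filter.Tendsto (fun t : ℝ => t / γ) Filter.atTop Filter.atTop :=
    Filter.Tendsto.atTop_div_const hγ Filter.tendsto_id
  have harg : ∀ c : ℝ, Filter.Tendsto (fun t => c - t / γ) Filter.atTop Filter.atBot := by
    intro c
    have := Filter.tendsto_atBot_add_const_left Filter.atTop c
      (Filter.tendsto_neg_atTop_atBot.comp hdiv)
    simpa [sub_eq_add_neg, Function.comp] using this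
  have hlim2 : Filter.Tendsto (fun t => K * Phi (a + γ - t / γ)) Filter.atTop (nhds 0) := by
    have := (tendsto_Phi_atBot.comp (harg (a + γ))).const_mul K
    simpa using this
  have hlim1 : Filter.Tendsto (fun t => Real.exp t * Phi (a - t / γ)) Filter.atTop (nhds 0) := by
    have hg0 : Filter.Tendsto (fun t => K * phi (a + γ - t / γ)) Filter.atTop (nhds 0) := by
      have := (tendsto_phi_atBot.comp (harg (a + γ))).const_mul K
      simpa using this
    refine squeeze_zero' ?_ ?_ hg0
    · exact Filter.Eventually.of_forall fun t =>
        mul_nonneg (Real.exp_pos t).le (Phi_nonneg _)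
    · filter_upwards [Filter.eventually_ge_atTop (γ * (a + 1))] with t ht
      have hx : a - t / γ ≤ -1 := by
        have h1 : a + 1 ≤ t / γ := by
          rw [le_div_iff₀ hγ]
          nlinarith
        linarith
      calc Real.exp t * Phi (a - t / γ) ≤ Real.exp t * phi (a - t / γ) := by
            exact mul_le_mul_of_nonneg_left (Phi_le_phi hx) (Real.exp_pos t).le
        _ = K * phi (a + γ - t / γ) := (hid t).symm
  have hlim : Filter.Tendsto F Filter.atTop (nhds 0) := by
    have := hlim1.sub hlim2
    simpa using this
  -- conclude
  have := integral_Ioi_of_hasDerivAt_of_nonneg' (a := 0) (g := F)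
    (g' := fun t => Real.exp t * Phi (a - t / γ))
    (fun x _ => hderiv x)
    (fun x _ => mul_nonneg (Real.exp_pos _).le (Phi_nonneg _)) hlim
  rw [this]
  simp [hF, hK]
  ring
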